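/- arXiv:quant-ph/0601088 — 3 statements merged into one kernel-verified Lean document; each statement's English description precedes it below -/
import Mathlib

section
/- The Bužek–Hillery universal cloning map UC, defined on 2×2 matrices by UC(|0⟩⟨0|) = (2/3)|00⟩⟨00| + (1/3)|Ψ⁺⟩⟨Ψ⁺|, UC(|1⟩⟨1|) = (2/3)|11⟩⟨11| + (1/3)|Ψ⁺⟩⟨Ψ⁺|, UC(|0⟩⟨1|) = (√2/3)(|Ψ⁺⟩⟨11| + |00⟩⟨Ψ⁺|), UC(|1⟩⟨0|) = (√2/3)(|11⟩⟨Ψ⁺| + |Ψ⁺⟩⟨00|), satisfies: for any one-qubit pure state |ψ⟩, the partial trace over either qubit of UC(|ψ⟩⟨ψ|) equals (2/3)|ψ⟩⟨ψ| + (1/3)·(I/2). -/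
open Matrix ComplexOrder

abbrev M2 := Matrix (Fin 2) (Fin 2) ℂ
abbrev M4 := Matrix (Fin 2 × Fin 2) (Fin 2 × Fin 2) ℂ

/-- Two-qubit computational basis ket `|i j⟩`. -/
def ket2 (i j : Fin 2) : Fin 2 × Fin 2 → ℂ := fun p => if p = (i, j) then 1 else 0

/-- The symmetric Bell state `|Ψ⁺⟩ = (|01⟩+|10⟩)/√2`. -/
noncomputable def PsiPlus : Fin 2 × Fin 2 → ℂ :=
  fun p => if p = (0, 1) ∨ p = (1, 0) then 1 / (Real.sqrt 2 : ℂ) else 0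

/-- Outer product `|v⟩⟨w|`. -/
def outer {n : Type*} (v w : n → ℂ) : Matrix n n ℂ := vecMulVec v (star w)

/-- The Bužek–Hillery universal cloning map, extended by linearity from its values
on the matrix units. -/
noncomputable def UC (ρ : M2) : M4 :=
  ρ 0 0 • ((2 / 3 : ℂ) • outer (ket2 0 0) (ket2 0 0) + (1 / 3 : ℂ) • outer PsiPlus PsiPlus)
  + ρ 1 1 • ((2 / 3 : ℂ) • outer (ket2 1 1) (ket2 1 1) + (1 / 3 : ℂ) • outer PsiPlus PsiPlus)
  + ρ 0 1 • ((Real.sqrt 2 / 3 : ℂ) • (outer PsiPlus (ket2 1 1) + outer (ket2 0 0) PsiPlus))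
  + ρ 1 0 • ((Real.sqrt 2 / 3 : ℂ) • (outer (ket2 1 1) PsiPlus + outer PsiPlus (ket2 0 0)))

/-- Partial trace over the first qubit. -/
noncomputable def ptrace1 (A : M4) : M2 := Matrix.of fun i j => ∑ k : Fin 2, A (k, i) (k, j)

/-- Partial trace over the second qubit. -/
noncomputable def ptrace2 (A : M4) : M2 := Matrix.of fun i j => ∑ k : Fin 2, A (i, k) (j, k)

theorem uc_partial_traces (ψ : Fin 2 → ℂ) (hψ : star ψ ⬝ᵥ ψ = 1) :
    ptrace2 (UC (outer ψ ψ)) =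
      (2 / 3 : ℂ) • outer ψ ψ + (1 / 3 : ℂ) • ((1 / 2 : ℂ) • (1 : M2)) ∧
    ptrace1 (UC (outer ψ ψ)) =
      (2 / 3 : ℂ) • outer ψ ψ + (1 / 3 : ℂ) • ((1 / 2 : ℂ) • (1 : M2)) := by
  have h2 : ((Real.sqrt 2 : ℂ)) * (1 / (Real.sqrt 2 : ℂ)) = 1 := by
    rw [mul_one_div, div_self]
    simpa using (Real.sqrt_ne_zero' (x := 2)).2 (by norm_num)
  have hne : ((Real.sqrt 2 : ℝ) : ℂ) ≠ 0 := by
    simpa using (Real.sqrt_ne_zero' (x := 2)).2 (by norm_num)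
  have ha : ((Real.sqrt 2 : ℝ) : ℂ)⁻¹ ^ 2 = 1 / 2 := by
    rw [← Complex.ofReal_inv, ← Complex.ofReal_pow]
    norm_num [Real.sq_sqrt]
  have hnorm : (starRingEnd ℂ) (ψ 0) * ψ 0 + (starRingEnd ℂ) (ψ 1) * ψ 1 = 1 := by
    simpa [dotProduct, Fin.sum_univ_two, Pi.star_apply, RCLike.star_def] using hψ
  constructor <;>
  (ext i j
   fin_cases i <;> fin_cases j <;>
    simp only [ptrace1, ptrace2, UC, outer, ket2, PsiPlus, vecMulVec, Matrix.of_apply,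
        Fin.sum_univ_two, Matrix.add_apply, Matrix.smul_apply, Pi.star_apply, smul_eq_mul,
        Matrix.one_apply] <;>
    simp only [Prod.mk.injEq, Fin.isValue] <;>
    norm_num <;>
    ring_nf <;>
    simp only [ha, mul_inv_cancel_right₀ hne] <;>
    first | ring1 | linear_combination (1/6 : ℂ) * hnorm)
end

section
/- The universal copy map (the induced single-qubit map of Bužek–Hillery cloning) is 2/3-shrinking: for any one-qubit density matrix ρ, Tr₂(UC(ρ)) = (2/3)ρ + (1/3)·(I/2). -/
open Matrix ComplexOrder

theorem universal_copy_shrinking (ρ : M2) (hρ : ρ.PosSemidef) (htr : ρ.trace = 1) :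
    ptrace2 (UC ρ) = (2 / 3 : ℂ) • ρ + (1 / 3 : ℂ) • ((1 / 2 : ℂ) • (1 : M2)) := by
  have h2 : ((Real.sqrt 2 : ℂ)) * (1 / (Real.sqrt 2 : ℂ)) = 1 := by
    rw [mul_one_div, div_self]
    simpa using (Real.sqrt_ne_zero' (x := 2)).2 (by norm_num)
  have hs : ((Real.sqrt 2 : ℝ) : ℂ) ^ 2 = 2 := by
    norm_cast; exact Real.sq_sqrt (by norm_num)
  have hne : ((Real.sqrt 2 : ℝ) : ℂ) ≠ 0 := by
    intro h; rw [h] at hs; norm_num at hs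
  have hmul : ((Real.sqrt 2 : ℝ) : ℂ) * ((Real.sqrt 2 : ℝ) : ℂ)⁻¹ = 1 :=
    mul_inv_cancel₀ hne
  have htr' : ρ 0 0 + ρ 1 1 = 1 := by
    simpa [Matrix.trace, Fin.sum_univ_two] using htr
  ext i j
  fin_cases i <;> fin_cases j <;>
  · simp only [ptrace2, UC, outer, ket2, PsiPlus, vecMulVec, Matrix.add_apply,
      Matrix.smul_apply, Matrix.of_apply, Fin.sum_univ_two, Matrix.one_apply,
      Prod.mk.injEq, smul_eq_mul, Fin.isValue, Pi.star_apply]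
    norm_num [star_div₀, h2]
    ring_nf
    try simp only [inv_pow, hs, hmul]
    first
      | linear_combination (-1/2 : ℂ) * htr'
      | linear_combination (1/6 : ℂ) * htr'
      | linear_combination (-2/3 : ℂ) * htr'
      | (field_simp)
      | ring
end

section
/- Let |ξ⟩ = α|ψ₂⟩|ψ₁⟩ + β|ψ₂⊥⟩|ψ₁⊥⟩ be a Schmidt decomposition of a bipartite pure state (with {|ψ₁⟩,|ψ₁⊥⟩} and {|ψ₂⟩,|ψ₂⊥⟩} orthonormal, |α|² + |β|² = 1), and let |χ⟩ = α|ψ₂⟩|ψ₁⟩ be the unnormalized product approximation. Then ‖ |ξ⟩⟨ξ| - |χ⟩⟨χ| ‖_tr ≤ 2|β|√(1 - |β|²/2). -/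
open Matrix ComplexOrder

open Classical in
noncomputable def matSqrt {n : Type*} [Fintype n] [DecidableEq n] (A : Matrix n n ℂ) :
    Matrix n n ℂ :=
  if h : A.PosSemidef then
    (h.1.eigenvectorUnitary : Matrix n n ℂ) * diagonal ((↑) ∘ (√·) ∘ h.1.eigenvalues) *
      (star h.1.eigenvectorUnitary : Matrix n n ℂ)
  else 0

/-- The (unnormalized) trace norm `‖A‖_tr = Tr √(AA†)`. -/
noncomputable def traceNorm {n : Type*} [Fintype n] [DecidableEq n] (A : Matrix n n ℂ) : ℝ :=
  (matSqrt (A * Aᴴ)).trace.re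

/-- Tensor product of vectors. -/
def tens {m n : Type*} (v : m → ℂ) (w : n → ℂ) : m × n → ℂ := fun p => v p.1 * w p.2

section aux
set_option linter.unusedSectionVars false
variable {N : Type*} [Fintype N] [DecidableEq N]

lemma outer_mul_outer (v w x y : N → ℂ) :
    outer v w * outer x y = (star w ⬝ᵥ x) • outer v y := by
  ext i j
  simp only [outer, mul_apply, vecMulVec_apply, Matrix.smul_apply, smul_eq_mul, dotProduct,
    Pi.star_apply]
  rw [Finset.sum_mul]
  exact Finset.sum_congr rfl fun k _ => by ring

lemma outer_conjT (v w : N → ℂ) : (outer v w)ᴴ = outer w v := by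
  ext i j
  simp [outer, vecMulVec_apply, mul_comm]

lemma trace_outer (v w : N → ℂ) : (outer v w).trace = star w ⬝ᵥ v := by
  simp [outer, trace, diag, vecMulVec_apply, dotProduct, mul_comm]

lemma outer_add_left (u v w : N → ℂ) : outer (u + v) w = outer u w + outer v w := by
  ext i j; simp [outer, vecMulVec_apply, add_mul]

lemma outer_add_right (u v w : N → ℂ) : outer u (v + w) = outer u v + outer u w := by
  ext i j; simp [outer, vecMulVec_apply, mul_add]

lemma outer_smul_left (c : ℂ) (v w : N → ℂ) : outer (c • v) w = c • outer v w := by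
  ext i j; simp [outer, vecMulVec_apply, mul_assoc]

lemma outer_smul_right (c : ℂ) (v w : N → ℂ) : outer v (c • w) = (starRingEnd ℂ c) • outer v w := by
  ext i j; simp [outer, vecMulVec_apply]; ring

lemma posSemidef_outer_self (v : N → ℂ) : (outer v v).PosSemidef := by
  rw [outer, vecMulVec_eq Unit, ← conjTranspose_replicateCol]
  exact posSemidef_self_mul_conjTranspose _

lemma posSemidef_real_smul {A : Matrix N N ℂ} (hA : A.PosSemidef) {c : ℝ} (hc : 0 ≤ c) :
    (((c : ℂ)) • A).PosSemidef := by
  exact hA.smul (by exact_mod_cast Complex.zero_le_real.2 hc)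

open scoped MatrixOrder in
lemma matSqrt_unique {A S : Matrix N N ℂ}
    (hA : A.PosSemidef) (hS : S.PosSemidef) (h : S ^ 2 = A) : matSqrt A = S := by
  have : matSqrt A = CFC.sqrt A := by
    rw [CFC.sqrt_eq_cfc, cfc_nnreal_eq_real _ A, hA.1.cfc_eq, matSqrt, dif_pos hA]
    simp only [IsHermitian.cfc, Unitary.conjStarAlgAut_apply]
    congr 2
    congr 1
    funext i
    simp [max_eq_left (hA.eigenvalues_nonneg i)]
  rw [this]
  exact CFC.sqrt_unique (by rw [← sq, h]) hS.nonneg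

lemma matSqrt_zero : matSqrt (0 : Matrix N N ℂ) = 0 := by
  exact matSqrt_unique Matrix.PosSemidef.zero Matrix.PosSemidef.zero (by simp)

lemma keyLemma (α β : ℂ) (e1 e2 : N → ℂ)
    (hnorm : ‖α‖ ^ 2 + ‖β‖ ^ 2 = 1)
    (h11 : star e1 ⬝ᵥ e1 = 1) (h22 : star e2 ⬝ᵥ e2 = 1)
    (h12 : star e1 ⬝ᵥ e2 = 0) (h21 : star e2 ⬝ᵥ e1 = 0) :
    traceNorm (outer (α • e1 + β • e2) (α • e1 + β • e2) - outer (α • e1) (α • e1))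
      ≤ 2 * ‖β‖ * Real.sqrt (1 - ‖β‖ ^ 2 / 2) := by
  by_cases hβ : β = 0
  · subst hβ
    simp only [zero_smul, add_zero, sub_self]
    rw [traceNorm, Matrix.zero_mul, matSqrt_zero]
    simp [Real.sqrt_nonneg]
  -- notation
  set D : Matrix N N ℂ :=
    outer (α • e1 + β • e2) (α • e1 + β • e2) - outer (α • e1) (α • e1) with hDdef
  have hb : 0 < ‖β‖ := norm_pos_iff.2 hβ
  have ha0 : 0 ≤ ‖α‖ ^ 2 := sq_nonneg _
  have hDH : Dᴴ = D := by
    rw [hDdef, conjTranspose_sub, outer_conjT, outer_conjT]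
  set cA : ℂ := starRingEnd ℂ α * α with hcA
  set cB : ℂ := starRingEnd ℂ β * β with hcB
  have hAcast : ((‖α‖ ^ 2 : ℝ) : ℂ) = cA := by
    rw [hcA, Complex.sq_norm, ← Complex.mul_conj]; ring
  have hBcast : ((‖β‖ ^ 2 : ℝ) : ℂ) = cB := by
    rw [hcB, Complex.sq_norm, ← Complex.mul_conj]; ring
  -- D as a linear combination
  have hD : D = (α * starRingEnd ℂ β) • outer e1 e2 + (β * starRingEnd ℂ α) • outer e2 e1
      + cB • outer e2 e2 := by
    rw [hDdef]
    simp only [outer_add_left, outer_add_right, outer_smul_left, outer_smul_right, hcB]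
    module
  -- the candidate square root (up to scalar)
  set T : Matrix N N ℂ := D * Dᴴ + (cA * cB) • (outer e1 e1 + outer e2 e2) with hTdef
  have hDD : D * Dᴴ = (cA * cB) • outer e1 e1 + (α * starRingEnd ℂ β * cB) • outer e1 e2
      + (β * starRingEnd ℂ α * cB) • outer e2 e1 + (cA * cB + cB * cB) • outer e2 e2 := by
    rw [hDH, hD]
    simp only [Matrix.add_mul, Matrix.mul_add, Matrix.smul_mul, Matrix.mul_smul,
      outer_mul_outer, h11, h22, h12, h21, one_smul, zero_smul, smul_smul, smul_zero,
      add_zero, zero_add, hcA, hcB]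
    module
  have hTT : T * T = (cB * (cB + 4 * cA)) • (D * Dᴴ) := by
    rw [hTdef, hDD]
    simp only [Matrix.add_mul, Matrix.mul_add, Matrix.smul_mul, Matrix.mul_smul,
      outer_mul_outer, h11, h22, h12, h21, one_smul, zero_smul, smul_smul, smul_zero,
      add_zero, zero_add, hcA, hcB]
    module
  -- real scalars
  set r : ℝ := ‖β‖ * Real.sqrt (‖β‖ ^ 2 + 4 * ‖α‖ ^ 2) with hrdef
  have hsq : Real.sqrt (‖β‖ ^ 2 + 4 * ‖α‖ ^ 2) ^ 2
      = ‖β‖ ^ 2 + 4 * ‖α‖ ^ 2 := Real.sq_sqrt (by positivity)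
  have hr0 : 0 < r := by
    rw [hrdef]
    have : 0 < Real.sqrt (‖β‖ ^ 2 + 4 * ‖α‖ ^ 2) := by
      apply Real.sqrt_pos.2; positivity
    positivity
  have hr2 : ((r ^ 2 : ℝ) : ℂ) = cB * (cB + 4 * cA) := by
    rw [hrdef, mul_pow, hsq, ← hAcast, ← hBcast]
    push_cast
    ring
  set S : Matrix N N ℂ := ((r⁻¹ : ℝ) : ℂ) • T with hSdef
  -- S is PSD
  have hSpsd : S.PosSemidef := by
    rw [hSdef]
    apply posSemidef_real_smul _ (inv_nonneg.2 hr0.le)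
    rw [hTdef]
    apply (posSemidef_self_mul_conjTranspose D).add
    have : (cA * cB) • (outer e1 e1 + outer e2 e2)
        = ((‖α‖ ^ 2 * ‖β‖ ^ 2 : ℝ) : ℂ) • (outer e1 e1 + outer e2 e2) := by
      rw [Complex.ofReal_mul, hAcast, hBcast]
    rw [this]
    exact posSemidef_real_smul ((posSemidef_outer_self e1).add (posSemidef_outer_self e2))
      (by positivity)
  -- S squares to D * Dᴴ
  have hS2 : S ^ 2 = D * Dᴴ := by
    rw [sq, hSdef, Matrix.smul_mul, Matrix.mul_smul, smul_smul, hTT, smul_smul, ← hr2]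
    have : ((r⁻¹ : ℝ) : ℂ) * ((r⁻¹ : ℝ) : ℂ) * ((r ^ 2 : ℝ) : ℂ) = 1 := by
      push_cast
      field_simp
    rw [this, one_smul]
  have hpsd : (D * Dᴴ).PosSemidef := posSemidef_self_mul_conjTranspose D
  have hsqrt : matSqrt (D * Dᴴ) = S := by
    exact matSqrt_unique hpsd hSpsd hS2
  -- compute the trace of S
  have htrT : T.trace = ((r ^ 2 : ℝ) : ℂ) := by
    rw [hTdef, hDD, hr2]
    simp only [trace_add, trace_smul, trace_outer, h11, h22, h12, h21, smul_eq_mul]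
    ring
  have htrS : S.trace = ((r : ℝ) : ℂ) := by
    rw [hSdef, trace_smul, htrT, smul_eq_mul]
    push_cast
    field_simp
  rw [traceNorm, hsqrt, htrS, Complex.ofReal_re]
  -- final inequality
  have hb2 : ‖α‖ ^ 2 = 1 - ‖β‖ ^ 2 := by linarith
  rw [hrdef, hb2]
  have h1 : Real.sqrt (‖β‖ ^ 2 + 4 * (1 - ‖β‖ ^ 2))
      ≤ Real.sqrt (4 - 2 * ‖β‖ ^ 2) := by
    apply Real.sqrt_le_sqrt
    nlinarith [sq_nonneg (‖β‖)]
  have h2 : Real.sqrt (4 - 2 * ‖β‖ ^ 2)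
      = 2 * Real.sqrt (1 - ‖β‖ ^ 2 / 2) := by
    rw [show (4 - 2 * ‖β‖ ^ 2 : ℝ) = 2 ^ 2 * (1 - ‖β‖ ^ 2 / 2) by ring,
      Real.sqrt_mul (by positivity), Real.sqrt_sq (by norm_num)]
  calc ‖β‖ * Real.sqrt (‖β‖ ^ 2 + 4 * (1 - ‖β‖ ^ 2))
      ≤ ‖β‖ * (2 * Real.sqrt (1 - ‖β‖ ^ 2 / 2)) := by
        rw [← h2]; exact mul_le_mul_of_nonneg_left h1 hb.le
    _ = 2 * ‖β‖ * Real.sqrt (1 - ‖β‖ ^ 2 / 2) := by ring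

end aux

lemma tens_dot {m n : Type*} [Fintype m] [Fintype n] (v x : m → ℂ) (w y : n → ℂ) :
    star (tens v w) ⬝ᵥ tens x y = (star v ⬝ᵥ x) * (star w ⬝ᵥ y) := by
  simp only [dotProduct, tens, Pi.star_apply, Fintype.sum_prod_type, Finset.sum_mul_sum,
    star_mul']
  exact Finset.sum_congr rfl fun i _ => Finset.sum_congr rfl fun j _ => by ring

theorem schmidt_product_approx {m n : Type*} [Fintype m] [DecidableEq m]
    [Fintype n] [DecidableEq n]
    (α β : ℂ) (ψ₁ ψ₁p : n → ℂ) (ψ₂ ψ₂p : m → ℂ)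
    (hnorm : ‖α‖ ^ 2 + ‖β‖ ^ 2 = 1)
    (h₁ : star ψ₁ ⬝ᵥ ψ₁ = 1) (h₁p : star ψ₁p ⬝ᵥ ψ₁p = 1) (h₁o : star ψ₁ ⬝ᵥ ψ₁p = 0)
    (h₂ : star ψ₂ ⬝ᵥ ψ₂ = 1) (h₂p : star ψ₂p ⬝ᵥ ψ₂p = 1) (h₂o : star ψ₂ ⬝ᵥ ψ₂p = 0) :
    traceNorm (outer (α • tens ψ₂ ψ₁ + β • tens ψ₂p ψ₁p)
                     (α • tens ψ₂ ψ₁ + β • tens ψ₂p ψ₁p)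
               - outer (α • tens ψ₂ ψ₁) (α • tens ψ₂ ψ₁))
      ≤ 2 * ‖β‖ * Real.sqrt (1 - ‖β‖ ^ 2 / 2) := by
  have h₂o' : star ψ₂p ⬝ᵥ ψ₂ = 0 := by
    have : star ψ₂p ⬝ᵥ ψ₂ = starRingEnd ℂ (star ψ₂ ⬝ᵥ ψ₂p) := by
      simp only [dotProduct, Pi.star_apply, map_sum, _root_.map_mul, Complex.conj_conj,
        RingHom.coe_comp]
      exact Finset.sum_congr rfl fun i _ => by simp [mul_comm]
    rw [this, h₂o, map_zero]
  exact keyLemma α β (tens ψ₂ ψ₁) (tens ψ₂p ψ₁p) hnorm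
    (by rw [tens_dot, h₂, h₁, one_mul])
    (by rw [tens_dot, h₂p, h₁p, one_mul])
    (by rw [tens_dot, h₂o, zero_mul])
    (by rw [tens_dot, h₂o', zero_mul])
end
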